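/- Let (ρ_i, χ_i)_{i≥0} be an essential continuous MacLane chain of stable degree m on K[x], let φ ∈ KP_∞, let t = t_∞(φ) be its numerical character, and let i_0 be an index such that t_i(φ) = t for all i ≥ i_0. For each j ≥ 1 write the χ_j-expansion φ = Σ_s a_{s,j} χ_j^s. Then for all indices i, j with i_0 < i < j one has φ ∼_{ρ_i} a_{t,j}·χ_j^t. -/

import Mathlib

open Polynomial

namespace KeyPolPaper

variable {K : Type*} [Field K] {Λ : Type*} [AddCommGroup Λ] [LinearOrder Λ] [IsOrderedAddMonoid Λ]

/-- A valuation on `F[X]` with values in `Λ ∪ {∞}`: multiplicative, satisfies the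
ultrametric inequality, and is finite on nonzero constants. -/
def IsValuation {F : Type*} [Field F] (w : F[X] → WithTop Λ) : Prop :=
  w 0 = ⊤ ∧ (∀ f g : F[X], w (f * g) = w f + w g) ∧
    (∀ f g : F[X], min (w f) (w g) ≤ w (f + g)) ∧
    ∀ a : F, a ≠ 0 → w (C a) ≠ ⊤

/-- `μ ≤ ν` for valuations on `K[X]`. -/
def ValLE (μ ν : K[X] → WithTop Λ) : Prop := ∀ f : K[X], μ f ≤ ν f

/-- `μ < ν` for valuations on `K[X]`. -/
def ValLT (μ ν : K[X] → WithTop Λ) : Prop := ValLE μ ν ∧ μ ≠ ν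

/-- ν-equivalence: `f ∼_ν g` iff `ν (f - g) > ν f`. -/
def VEquiv (ν : K[X] → WithTop Λ) (f g : K[X]) : Prop := ν f < ν (f - g)

/-- ν-divisibility: `h ∣_ν g` iff `g ∼_ν q * h` for some `q`. -/
def VDvd (ν : K[X] → WithTop Λ) (h g : K[X]) : Prop := ∃ q : K[X], VEquiv ν g (q * h)

/-- MacLane–Vaquié key polynomial: monic, ν-minimal and ν-irreducible. -/
def IsMLVKey (ν : K[X] → WithTop Λ) (φ : K[X]) : Prop :=
  φ.Monic ∧ (∀ f : K[X], f ≠ 0 → f.natDegree < φ.natDegree → ¬ VDvd ν φ f) ∧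
    ¬ VDvd ν φ 1 ∧ ∀ f g : K[X], VDvd ν φ (f * g) → VDvd ν φ f ∨ VDvd ν φ g

/-- `e` is the value `ε(f) = max_{b ≥ 1} (ν f - ν (∂_b f)) / b`; phrased multiplicatively,
`e` satisfies `ν f ≤ ν (∂_b f) + b • e` for all `b ≥ 1`, with equality for some `b ≥ 1`.
If `ν f = ∞` then `ε(f) = ∞`. -/
def IsEps (ν : K[X] → WithTop Λ) (f : K[X]) (e : WithTop Λ) : Prop :=
  (ν f = ⊤ ∧ e = ⊤) ∨
    (ν f ≠ ⊤ ∧ (∀ b : ℕ, 1 ≤ b → ν f ≤ ν (hasseDeriv b f) + b • e) ∧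
      ∃ b : ℕ, 1 ≤ b ∧ ν f = ν (hasseDeriv b f) + b • e)

/-- The invariant `ε(f)`; well defined (for non-constant `f`) since `Λ` is divisible and
the defining property determines `e` uniquely. -/
noncomputable def eps (ν : K[X] → WithTop Λ) (f : K[X]) : WithTop Λ :=
  letI := Classical.propDecidable (∃ e : WithTop Λ, IsEps ν f e)
  if h : ∃ e : WithTop Λ, IsEps ν f e then h.choose else ⊤

/-- The set `I(f)` of indices `b ≥ 1` with `ν (∂_b f) = ν f - b • ε(f)`. -/
def epsAttain (ν : K[X] → WithTop Λ) (f : K[X]) : Set ℕ :=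
  {b : ℕ | 1 ≤ b ∧ ν f = ν (hasseDeriv b f) + b • eps ν f}

/-- Abstract key polynomial for `ν`. -/
def IsKeyPoly (ν : K[X] → WithTop Λ) (Q : K[X]) : Prop :=
  Q.Monic ∧ 0 < Q.natDegree ∧
    ∀ f : K[X], 0 < f.natDegree → f.natDegree < Q.natDegree → eps ν f < eps ν Q

/-- The `s`-th coefficient of the canonical `Q`-expansion `f = Σ_s a_s Q^s`,
`deg a_s < deg Q`. -/
noncomputable def qCoeff (Q f : K[X]) (s : ℕ) : K[X] := ((· /ₘ Q)^[s] f) %ₘ Q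

/-- The truncation `ν_Q (f) = min_s ν (a_s Q^s)`. -/
noncomputable def trunc (ν : K[X] → WithTop Λ) (Q f : K[X]) : WithTop Λ :=
  (Finset.range (f.natDegree + 1)).inf fun s => ν (qCoeff Q f s * Q ^ s)

/-- `S_{ν,Q}(f)`: the set of indices attaining the minimum in `ν_Q(f)`. -/
def attain (ν : K[X] → WithTop Λ) (Q f : K[X]) : Set ℕ :=
  {s : ℕ | ν (qCoeff Q f s * Q ^ s) = trunc ν Q f}

/-- The augmented valuation `[μ; φ, γ] (f) = min_s (μ (a_s) + s • γ)` on φ-expansions. -/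
noncomputable def augVal (μ : K[X] → WithTop Λ) (φ : K[X]) (γ : WithTop Λ) (f : K[X]) :
    WithTop Λ :=
  (Finset.range (f.natDegree + 1)).inf fun s => μ (qCoeff φ f s) + s • γ

/-- `Φ_{μ,ν}`: monic polynomials of minimal degree with `μ φ < ν φ`. -/
def PhiSet (μ ν : K[X] → WithTop Λ) : Set K[X] :=
  {φ : K[X] | φ.Monic ∧ μ φ < ν φ ∧
    ∀ ψ : K[X], ψ.Monic → μ ψ < ν ψ → φ.natDegree ≤ ψ.natDegree}

/-- `mult f`: the least `b ≥ 1` with `∂_b f ≠ 0`. -/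
noncomputable def multOf (f : K[X]) : ℕ := sInf {b : ℕ | 1 ≤ b ∧ hasseDeriv b f ≠ 0}

/-- Abstract limit key polynomial for `ν` (conditions (K1)-(K4)). -/
def IsLimitKeyPoly (ν : K[X] → WithTop Λ) (Q : K[X]) : Prop :=
  Q.Monic ∧
    ∃ Qm : K[X], IsKeyPoly ν Qm ∧ ValLT (trunc ν Qm) ν ∧
      (∃ χ ∈ PhiSet (trunc ν Qm) ν, Qm.natDegree = χ.natDegree) ∧
      (∀ χ ∈ PhiSet (trunc ν Qm) ν, ∃ χ' ∈ PhiSet (trunc ν Qm) ν, ν χ < ν χ') ∧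
      (∀ χ ∈ PhiSet (trunc ν Qm) ν, trunc ν χ Q < ν Q) ∧
      ∀ Q' : K[X], Q'.Monic →
        (∀ χ ∈ PhiSet (trunc ν Qm) ν, trunc ν χ Q' < ν Q') → Q.natDegree ≤ Q'.natDegree

/-- A continuous MacLane chain of stable degree `m`: valuations `ρ_0 < ρ_1 < ⋯`,
monic key polynomials `χ_i` (for `i ≥ 1`) of degree `m`, with
`ρ_i = [ρ_{i-1}; χ_i, β_i]`, `β_i = ρ_i (χ_i) > ρ_{i-1} (χ_i)` and
`χ_{i+1} ∤_{ρ_i} χ_i`. -/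
structure MacLaneChain (K : Type*) [Field K] (Λ : Type*) [AddCommGroup Λ] [LinearOrder Λ] [IsOrderedAddMonoid Λ] where
  m : ℕ
  hm : 0 < m
  ρ : ℕ → K[X] → WithTop Λ
  χ : ℕ → K[X]
  β : ℕ → Λ
  isVal : ∀ i : ℕ, IsValuation (ρ i)
  mono : ∀ i : ℕ, ValLT (ρ i) (ρ (i + 1))
  monicChi : ∀ i : ℕ, (χ (i + 1)).Monic
  degChi : ∀ i : ℕ, (χ (i + 1)).natDegree = m
  keyChi : ∀ i : ℕ, IsMLVKey (ρ i) (χ (i + 1))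
  beta_def : ∀ i : ℕ, ρ (i + 1) (χ (i + 1)) = (β (i + 1) : WithTop Λ)
  beta_lt : ∀ i : ℕ, ρ i (χ (i + 1)) < (β (i + 1) : WithTop Λ)
  aug : ∀ i : ℕ, ρ (i + 1) = augVal (ρ i) (χ (i + 1)) (β (i + 1) : WithTop Λ)
  not_dvd : ∀ i : ℕ, ¬ VDvd (ρ (i + 1)) (χ (i + 2)) (χ (i + 1))

/-- A polynomial is stable w.r.t. the chain if its values `ρ_i f` are eventually constant. -/
def MacLaneChain.Stable (ch : MacLaneChain K Λ) (f : K[X]) : Prop :=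
  ∃ i0 : ℕ, ∀ i : ℕ, i0 ≤ i → ch.ρ i f = ch.ρ i0 f

/-- The chain is essential: non-stable polynomials exist and all have degree `> m`. -/
def MacLaneChain.Essential (ch : MacLaneChain K Λ) : Prop :=
  (∃ f : K[X], ¬ ch.Stable f) ∧ ∀ f : K[X], ¬ ch.Stable f → ch.m < f.natDegree

/-- MLV limit key polynomials of the chain: monic non-stable polynomials of minimal
degree `m_∞`. -/
def MacLaneChain.IsLimKP (ch : MacLaneChain K Λ) (φ : K[X]) : Prop :=
  φ.Monic ∧ ¬ ch.Stable φ ∧ ∀ f : K[X], ¬ ch.Stable f → φ.natDegree ≤ f.natDegree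

/-- Convex subgroup of a linearly ordered abelian group. -/
def IsConvexSubgroup (H : AddSubgroup Λ) : Prop :=
  ∀ x y : Λ, 0 < x → x < y → y ∈ H → x ∈ H

/-- The value group of a valuation: the subgroup of `Λ` generated by the finite values. -/
def valueGroup {F : Type*} [Field F] (ρ : F[X] → WithTop Λ) : AddSubgroup Λ :=
  AddSubgroup.closure {γ : Λ | ∃ f : F[X], ρ f = (γ : WithTop Λ)}

end KeyPolPaper

/-!
Write `i = k + 1`. Since `ρ_i(χ_j) = β_i`, the `ρ_i`-value of the term `a_{s,j} χ_j^s` is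
`ρ_k(a_{s,j}) + s β_i`, so it suffices that `t` is the unique index minimising
`s ↦ ρ_k(a_{s,j}) + s β_i`. For `s < t` this follows from the minimality of `t` at level `j`,
because `β_i < β_j`. For `s > t` we compare with the `χ_i`-expansion, in which `t` is the largest
minimising index at level `i`: lowering `β_i` slightly (`Λ` is divisible) to some `γ ≥ ρ_k(χ_i)`
makes `t` the unique minimiser of `ρ_k(a_{s,i}) + s γ`. As `χ_i` is `ρ_k`-minimal and
`ρ_k(χ_j - χ_i) = β_i > γ`, the augmentations `[ρ_k; χ_i, γ]` and `[ρ_k; χ_j, γ]` agree on `φ`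
together with their minimising indices, so `t` is also the unique minimiser of
`ρ_k(a_{s,j}) + s γ`; raising `γ` back to `β_i` keeps the inequalities for `s > t` strict.
-/

namespace KeyPolPaper

variable {K : Type*} [Field K] {Λ : Type*} [AddCommGroup Λ] [LinearOrder Λ]

lemma nsmul_ne_top_of_ne_top {M : Type*} [AddMonoid M] {x : WithTop M} (hx : x ≠ ⊤) (n : ℕ) :
    n • x ≠ ⊤ := by
  lift x to M using hx
  exact WithTop.coe_ne_top (a := n • x)

lemma add_nsmul_coe_lt_top {x : WithTop Λ} (hx : x ≠ ⊤) (n : ℕ) (γ : Λ) :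
    x + n • (γ : WithTop Λ) < ⊤ :=
  (WithTop.add_ne_top.mpr ⟨hx, nsmul_ne_top_of_ne_top WithTop.coe_ne_top n⟩).lt_top

section QCoeff

variable {Q : K[X]}

lemma qCoeff_zero_eq_modByMonic (Q f : K[X]) : qCoeff Q f 0 = f %ₘ Q := rfl

lemma qCoeff_succ (Q f : K[X]) (s : ℕ) : qCoeff Q f (s + 1) = qCoeff Q (f /ₘ Q) s :=
  congrArg (· %ₘ Q) (Function.iterate_succ_apply _ s f)

lemma qCoeff_zero (Q : K[X]) (s : ℕ) : qCoeff Q 0 s = 0 := by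
  induction s with
  | zero => exact zero_modByMonic Q
  | succ s ih => rw [qCoeff_succ, zero_divByMonic, ih]

lemma degree_qCoeff_lt (hQ : Q.Monic) (f : K[X]) (s : ℕ) : (qCoeff Q f s).degree < Q.degree :=
  degree_modByMonic_lt _ hQ

lemma add_divByMonic (hQ : Q.Monic) (f g : K[X]) : (f + g) /ₘ Q = f /ₘ Q + g /ₘ Q := by
  refine (div_modByMonic_unique _ (f %ₘ Q + g %ₘ Q) hQ ⟨?_, ?_⟩).1
  · linear_combination modByMonic_add_div f Q + modByMonic_add_div g Q
  · exact (degree_add_le _ _).trans_lt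
      (max_lt (degree_modByMonic_lt _ hQ) (degree_modByMonic_lt _ hQ))

lemma qCoeff_add (hQ : Q.Monic) (f g : K[X]) (s : ℕ) :
    qCoeff Q (f + g) s = qCoeff Q f s + qCoeff Q g s := by
  induction s generalizing f g with
  | zero => exact add_modByMonic f g
  | succ s ih => rw [qCoeff_succ, qCoeff_succ, qCoeff_succ, add_divByMonic hQ, ih]

lemma qCoeff_eq_zero_of_natDegree_lt (hQ : Q.Monic) (hQd : 0 < Q.natDegree) {f : K[X]}
    {s : ℕ} (h : f.natDegree < s) : qCoeff Q f s = 0 := by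
  induction s generalizing f with
  | zero => omega
  | succ s ih =>
    rw [qCoeff_succ]
    have := natDegree_divByMonic f hQ
    by_cases hfQ : f.natDegree < Q.natDegree
    · rw [(divByMonic_eq_zero_iff hQ).mpr (degree_lt_degree hfQ), qCoeff_zero]
    · exact ih (by omega)

lemma sum_qCoeff_mul_pow (hQ : Q.Monic) (hQd : 0 < Q.natDegree) (f : K[X]) :
    ∑ s ∈ Finset.range (f.natDegree + 1), qCoeff Q f s * Q ^ s = f := by
  suffices ∀ n, ∀ f : K[X], f.natDegree ≤ n →
      ∑ s ∈ Finset.range (n + 1), qCoeff Q f s * Q ^ s = f from this _ f le_rfl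
  intro n
  induction n with
  | zero =>
    intro f hf
    simpa [qCoeff_zero_eq_modByMonic] using
      (modByMonic_eq_self_iff hQ).mpr (degree_lt_degree (by omega))
  | succ n ih =>
    intro f hf
    have hdeg := natDegree_divByMonic f hQ
    rw [Finset.sum_range_succ', qCoeff_zero_eq_modByMonic, pow_zero, mul_one]
    simp_rw [qCoeff_succ, pow_succ, ← mul_assoc, ← Finset.sum_mul,
      ih (f /ₘ Q) (by omega)]
    linear_combination modByMonic_add_div f Q

lemma qCoeff_sum_mul_pow (hQ : Q.Monic) {c : ℕ → K[X]} (hc : ∀ u, (c u).degree < Q.degree)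
    (N s : ℕ) : qCoeff Q (∑ u ∈ Finset.range N, c u * Q ^ u) s = if s < N then c s else 0 := by
  induction N generalizing c s with
  | zero => simp [qCoeff_zero]
  | succ N ih =>
    have hsplit : ∑ u ∈ Finset.range (N + 1), c u * Q ^ u
        = c 0 + Q * ∑ u ∈ Finset.range N, c (u + 1) * Q ^ u := by
      rw [Finset.sum_range_succ', Finset.mul_sum, pow_zero, mul_one, add_comm]
      congr 1
      exact Finset.sum_congr rfl fun u _ => by ring
    obtain ⟨hdiv, hmod⟩ := div_modByMonic_unique _ _ hQ ⟨hsplit.symm, hc 0⟩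
    cases s with
    | zero => simp [qCoeff_zero_eq_modByMonic, hmod]
    | succ s =>
      rw [qCoeff_succ, hdiv, ih (fun u => hc (u + 1))]
      simp

end QCoeff

def IsVMinimal (ν : K[X] → WithTop Λ) (Q : K[X]) : Prop :=
  ∀ f : K[X], f ≠ 0 → f.natDegree < Q.natDegree → ¬ VDvd ν Q f

section AugVal

variable {ν : K[X] → WithTop Λ} {Q : K[X]} {γ : WithTop Λ}

lemma augVal_le (hν : IsValuation ν) (hQ : Q.Monic) (hQd : 0 < Q.natDegree) (f : K[X])
    (s : ℕ) : augVal ν Q γ f ≤ ν (qCoeff Q f s) + s • γ := by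
  by_cases hs : s < f.natDegree + 1
  · exact Finset.inf_le (Finset.mem_range.mpr hs)
  · rw [qCoeff_eq_zero_of_natDegree_lt hQ hQd (by omega), hν.1, WithTop.top_add]
    exact le_top

lemma le_augVal {f : K[X]} {W : WithTop Λ} (h : ∀ s, W ≤ ν (qCoeff Q f s) + s • γ) :
    W ≤ augVal ν Q γ f :=
  Finset.le_inf fun s _ => h s

lemma exists_augVal_eq (f : K[X]) : ∃ s, augVal ν Q γ f = ν (qCoeff Q f s) + s • γ := by
  obtain ⟨s, -, hs⟩ := Finset.exists_mem_eq_inf (Finset.range (f.natDegree + 1))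
    Finset.nonempty_range_add_one fun s => ν (qCoeff Q f s) + s • γ
  exact ⟨s, hs⟩

lemma augVal_zero (hν : IsValuation ν) : augVal ν Q γ 0 = ⊤ := by
  simp [augVal, qCoeff_zero, hν.1]

namespace IsVMinimal

lemma le_map_modByMonic (hmin : IsVMinimal ν Q) (hν : IsValuation ν) (hQ : Q.Monic)
    (f : K[X]) :
    ν f ≤ ν (f %ₘ Q) := by
  by_contra! hlt
  have hne : f %ₘ Q ≠ 0 := by
    rintro h
    rw [h, hν.1] at hlt
    exact not_top_lt hlt
  refine hmin _ hne (natDegree_lt_natDegree hne (degree_modByMonic_lt f hQ)) ⟨-(f /ₘ Q), ?_⟩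
  unfold VEquiv
  rwa [neg_mul, sub_neg_eq_add, mul_comm, modByMonic_add_div]

end IsVMinimal

lemma le_natDegree_of_map_qCoeff_ne_top (hν : IsValuation ν) (hQ : Q.Monic)
    (hQd : 0 < Q.natDegree) {f : K[X]} {t : ℕ} (h : ν (qCoeff Q f t) ≠ ⊤) : t ≤ f.natDegree := by
  by_contra! hlt
  exact h (by rw [qCoeff_eq_zero_of_natDegree_lt hQ hQd hlt, hν.1])

lemma trunc_le (hν : IsValuation ν) (hQ : Q.Monic) (hQd : 0 < Q.natDegree) (f : K[X]) (s : ℕ) :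
    trunc ν Q f ≤ ν (qCoeff Q f s * Q ^ s) := by
  by_cases hs : s < f.natDegree + 1
  · exact Finset.inf_le (Finset.mem_range.mpr hs)
  · rw [qCoeff_eq_zero_of_natDegree_lt hQ hQd (by omega), zero_mul, hν.1]
    exact le_top

lemma terms_of_isGreatest_attain (hν : IsValuation ν) (hQ : Q.Monic) (hQd : 0 < Q.natDegree)
    {f : K[X]} {t : ℕ} (h : IsGreatest (attain ν Q f) t) :
    ν (qCoeff Q f t * Q ^ t) ≠ ⊤ ∧
      (∀ s, ν (qCoeff Q f t * Q ^ t) ≤ ν (qCoeff Q f s * Q ^ s)) ∧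
      ∀ s, t < s → ν (qCoeff Q f t * Q ^ t) < ν (qCoeff Q f s * Q ^ s) := by
  have hattain : ν (qCoeff Q f t * Q ^ t) = trunc ν Q f := h.1
  refine ⟨fun htop => ?_, fun s => hattain ▸ trunc_le hν hQ hQd f s, fun s hts => ?_⟩
  · -- every index beyond the degree of `f` would attain the minimum `⊤`
    have hmem : f.natDegree + 1 + t ∈ attain ν Q f := by
      show ν _ = trunc ν Q f
      rw [qCoeff_eq_zero_of_natDegree_lt hQ hQd (by omega), zero_mul, hν.1, ← hattain, htop]
    have := h.2 hmem
    omega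
  · refine (hattain ▸ trunc_le hν hQ hQd f s).lt_of_ne fun heq => ?_
    have := h.2 (show s ∈ attain ν Q f from (heq.symm.trans hattain))
    omega

end AugVal

variable [IsOrderedAddMonoid Λ]

section Valuation

variable {F : Type*} [Field F] {ν : F[X] → WithTop Λ}

namespace IsValuation

lemma map_one (hν : IsValuation ν) : ν 1 = 0 := by
  have hfin : ν 1 ≠ ⊤ := by simpa using hν.2.2.2 1 one_ne_zero
  have h := hν.2.1 1 1
  rw [one_mul] at h
  lift ν 1 to Λ using hfin with v
  norm_cast at h ⊢
  exact left_eq_add.mp h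

lemma map_neg (hν : IsValuation ν) (f : F[X]) : ν (-f) = ν f := by
  have hfin : ν (-1) ≠ ⊤ := by simpa using hν.2.2.2 (-1) (neg_ne_zero.mpr one_ne_zero)
  have h := hν.2.1 (-1) (-1)
  rw [neg_mul_neg, one_mul, hν.map_one] at h
  have hneg_one : ν (-1) = 0 := by
    lift ν (-1) to Λ using hfin with v
    norm_cast at h ⊢
    exact two_nsmul_eq_zero.mp ((two_nsmul v).trans h)
  rw [neg_eq_neg_one_mul, hν.2.1, hneg_one, zero_add]

lemma map_sub_comm (hν : IsValuation ν) (f g : F[X]) : ν (f - g) = ν (g - f) := by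
  rw [← hν.map_neg, neg_sub]

lemma min_le_map_sub (hν : IsValuation ν) (f g : F[X]) : min (ν f) (ν g) ≤ ν (f - g) := by
  simpa [sub_eq_add_neg, hν.map_neg] using hν.2.2.1 f (-g)

lemma map_add_eq_of_lt (hν : IsValuation ν) {f g : F[X]} (h : ν f < ν g) :
    ν (f + g) = ν f := by
  refine le_antisymm ?_ ((le_min le_rfl h.le).trans (hν.2.2.1 f g))
  by_contra! hlt
  have := hν.min_le_map_sub (f + g) g
  rw [add_sub_cancel_right] at this
  exact this.not_gt (lt_min hlt h)

lemma map_pow (hν : IsValuation ν) (f : F[X]) (n : ℕ) : ν (f ^ n) = n • ν f := by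
  induction n with
  | zero => simpa using hν.map_one
  | succ n ih => rw [pow_succ, hν.2.1, ih, succ_nsmul]

lemma vEquiv_sum (hν : IsValuation ν) {S : Finset ℕ} {G : ℕ → F[X]} {t : ℕ} (ht : t ∈ S)
    (hfin : ν (G t) ≠ ⊤) (hlt : ∀ s ∈ S, s ≠ t → ν (G t) < ν (G s)) :
    VEquiv ν (∑ s ∈ S, G s) (G t) := by
  classical
  have inf_le_map_sum : ∀ T : Finset ℕ, T.inf (fun s => ν (G s)) ≤ ν (∑ s ∈ T, G s) := by
    intro T
    induction T using Finset.induction_on with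
    | empty => simp [hν.1]
    | insert a T ha ih =>
      rw [Finset.sum_insert ha, Finset.inf_insert]
      exact (inf_le_inf_left _ ih).trans (hν.2.2.1 _ _)
  have hrest : ν (G t) < ν (∑ s ∈ S.erase t, G s) :=
    ((Finset.lt_inf_iff hfin.lt_top).mpr fun s hs => hlt s (Finset.mem_of_mem_erase hs)
      (Finset.ne_of_mem_erase hs)).trans_le (inf_le_map_sum _)
  unfold VEquiv
  rw [← Finset.add_sum_erase S G ht, add_sub_cancel_left, hν.map_add_eq_of_lt hrest]
  exact hrest

lemma le_and_eq_iff_of_lt (hν : IsValuation ν) {x y : F[X]} {c V : WithTop Λ}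
    (hx : V ≤ ν x + c) (hy : V < ν y + c) :
    V ≤ ν (x + y) + c ∧ (ν (x + y) + c = V ↔ ν x + c = V) := by
  rcases hx.eq_or_lt with hV | hV
  · have hxy : ν x < ν y := lt_of_add_lt_add_right (hV ▸ hy)
    rw [hν.map_add_eq_of_lt hxy]
    exact ⟨hV.le, by simp [hV]⟩
  · have hlt : V < ν (x + y) + c := calc
      V < min (ν x) (ν y) + c := by rw [← min_add_add_right]; exact lt_min hV hy
      _ ≤ ν (x + y) + c := add_le_add_left (hν.2.2.1 x y) c
    exact ⟨hlt.le, iff_of_false hlt.ne' hV.ne'⟩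

end IsValuation

end Valuation

section AugVal

variable {ν : K[X] → WithTop Λ} {Q : K[X]} {γ : WithTop Λ}

lemma augVal_eq_min (hν : IsValuation ν) (hQ : Q.Monic) (hQd : 0 < Q.natDegree) (f : K[X]) :
    augVal ν Q γ f = min (ν (f %ₘ Q)) (γ + augVal ν Q γ (f /ₘ Q)) := by
  refine le_antisymm (le_min ?_ ?_) (le_augVal fun s => ?_)
  · simpa [qCoeff_zero_eq_modByMonic] using augVal_le (γ := γ) hν hQ hQd f 0
  · obtain ⟨s, hs⟩ := exists_augVal_eq (ν := ν) (γ := γ) (f /ₘ Q)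
    calc augVal ν Q γ f ≤ ν (qCoeff Q f (s + 1)) + (s + 1) • γ := augVal_le hν hQ hQd f _
      _ = γ + augVal ν Q γ (f /ₘ Q) := by rw [hs, qCoeff_succ, succ_nsmul]; abel
  · cases s with
    | zero => simp [qCoeff_zero_eq_modByMonic]
    | succ s =>
      calc min (ν (f %ₘ Q)) (γ + augVal ν Q γ (f /ₘ Q))
          ≤ γ + (ν (qCoeff Q (f /ₘ Q) s) + s • γ) :=
            (min_le_right _ _).trans (add_le_add_right (augVal_le hν hQ hQd _ s) γ)
        _ = ν (qCoeff Q f (s + 1)) + (s + 1) • γ := by rw [qCoeff_succ, succ_nsmul]; abel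

lemma augVal_of_degree_lt (hν : IsValuation ν) (hQ : Q.Monic) (hQd : 0 < Q.natDegree)
    {f : K[X]} (h : f.degree < Q.degree) : augVal ν Q γ f = ν f := by
  rw [augVal_eq_min hν hQ hQd, (modByMonic_eq_self_iff hQ).mpr h,
    (divByMonic_eq_zero_iff hQ).mpr h, augVal_zero hν, add_top, min_top_right]

lemma augVal_self_mul (hν : IsValuation ν) (hQ : Q.Monic) (hQd : 0 < Q.natDegree)
    (g : K[X]) : augVal ν Q γ (Q * g) = γ + augVal ν Q γ g := by
  rw [augVal_eq_min hν hQ hQd, self_mul_modByMonic hQ, mul_divByMonic_cancel_left g hQ, hν.1,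
    min_top_left]

lemma augVal_pow_mul (hν : IsValuation ν) (hQ : Q.Monic) (hQd : 0 < Q.natDegree)
    (s : ℕ) (g : K[X]) : augVal ν Q γ (Q ^ s * g) = s • γ + augVal ν Q γ g := by
  induction s with
  | zero => simp
  | succ s ih => rw [pow_succ', mul_assoc, augVal_self_mul hν hQ hQd, ih, succ_nsmul']; abel

lemma min_le_augVal_add (hν : IsValuation ν) (hQ : Q.Monic) (hQd : 0 < Q.natDegree)
    (f g : K[X]) : min (augVal ν Q γ f) (augVal ν Q γ g) ≤ augVal ν Q γ (f + g) := by
  obtain ⟨s, hs⟩ := exists_augVal_eq (ν := ν) (γ := γ) (f + g)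
  rw [hs, qCoeff_add hQ]
  calc min (augVal ν Q γ f) (augVal ν Q γ g)
      ≤ min (ν (qCoeff Q f s) + s • γ) (ν (qCoeff Q g s) + s • γ) :=
        min_le_min (augVal_le hν hQ hQd f s) (augVal_le hν hQ hQd g s)
    _ = min (ν (qCoeff Q f s)) (ν (qCoeff Q g s)) + s • γ := min_add_add_right _ _ _
    _ ≤ ν (qCoeff Q f s + qCoeff Q g s) + s • γ := add_le_add_left (hν.2.2.1 _ _) _

lemma inf_le_augVal_sum (hν : IsValuation ν) (hQ : Q.Monic) (hQd : 0 < Q.natDegree)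
    (S : Finset ℕ) (G : ℕ → K[X]) :
    S.inf (fun s => augVal ν Q γ (G s)) ≤ augVal ν Q γ (∑ s ∈ S, G s) := by
  classical
  induction S using Finset.induction_on with
  | empty => simp [augVal_zero hν]
  | insert a S ha ih =>
    rw [Finset.sum_insert ha, Finset.inf_insert]
    exact (inf_le_inf_left _ ih).trans (min_le_augVal_add hν hQ hQd _ _)

namespace IsVMinimal

lemma le_map_divByMonic_add (hmin : IsVMinimal ν Q) (hν : IsValuation ν) (hQ : Q.Monic)
    (f : K[X]) : ν f ≤ ν (f /ₘ Q) + ν Q := by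
  have hdiv : f /ₘ Q * Q = f - f %ₘ Q := by linear_combination modByMonic_add_div f Q
  rw [← hν.2.1, hdiv]
  exact (le_min le_rfl (hmin.le_map_modByMonic hν hQ f)).trans (hν.min_le_map_sub _ _)

lemma le_augVal (hmin : IsVMinimal ν Q) (hν : IsValuation ν) (hQ : Q.Monic)
    (hQd : 0 < Q.natDegree) (hγ : ν Q ≤ γ) (f : K[X]) : ν f ≤ augVal ν Q γ f := by
  induction hn : f.natDegree using Nat.strong_induction_on generalizing f with
  | _ n ih =>
    rw [augVal_eq_min hν hQ hQd]
    refine le_min (hmin.le_map_modByMonic hν hQ f) ?_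
    by_cases hq : f /ₘ Q = 0
    · rw [hq, augVal_zero hν, add_top]
      exact le_top
    have hf : f ≠ 0 := by rintro rfl; exact hq (zero_divByMonic Q)
    have hlt : (f /ₘ Q).natDegree < n := hn ▸ natDegree_lt_natDegree hq
      (degree_divByMonic_lt f Q hf (natDegree_pos_iff_degree_pos.mp hQd))
    calc ν f ≤ ν (f /ₘ Q) + ν Q := hmin.le_map_divByMonic_add hν hQ f
      _ ≤ γ + augVal ν Q γ (f /ₘ Q) := by
        rw [add_comm]; exact add_le_add hγ (ih _ hlt _ rfl)

lemma le_augVal_mul (hmin : IsVMinimal ν Q) (hν : IsValuation ν) (hQ : Q.Monic)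
    (hQd : 0 < Q.natDegree) (hγ : ν Q ≤ γ) (a g : K[X]) :
    ν a + augVal ν Q γ g ≤ augVal ν Q γ (a * g) := by
  have hsum : a * g = ∑ s ∈ Finset.range (g.natDegree + 1), Q ^ s * (a * qCoeff Q g s) := by
    conv_lhs => rw [← sum_qCoeff_mul_pow hQ hQd g]
    rw [Finset.mul_sum]
    exact Finset.sum_congr rfl fun s _ => by ring
  rw [hsum]
  refine le_trans (Finset.le_inf fun s _ => ?_) (inf_le_augVal_sum hν hQ hQd _ _)
  rw [augVal_pow_mul hν hQ hQd]
  calc ν a + augVal ν Q γ g ≤ ν a + (ν (qCoeff Q g s) + s • γ) :=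
        add_le_add_right (augVal_le hν hQ hQd g s) _
    _ = s • γ + ν (a * qCoeff Q g s) := by rw [hν.2.1]; abel
    _ ≤ s • γ + augVal ν Q γ (a * qCoeff Q g s) :=
        add_le_add_right (hmin.le_augVal hν hQ hQd hγ _) _

end IsVMinimal

end AugVal

lemma degree_sub_lt_of_monic {Q Q' : K[X]} (hQ : Q.Monic) (hQ' : Q'.Monic)
    (hdeg : Q'.degree = Q.degree) : (Q' - Q).degree < Q.degree :=
  degree_sub_lt_right hdeg hQ.ne_zero (by rw [hQ'.leadingCoeff, hQ.leadingCoeff])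

def IsStrictMinTerm (ν : K[X] → WithTop Λ) (Q f : K[X]) (γ : WithTop Λ) (t : ℕ) : Prop :=
  ∀ s ≠ t, ν (qCoeff Q f t) + t • γ < ν (qCoeff Q f s) + s • γ

section Transfer

variable {ν : K[X] → WithTop Λ} {Q Q' : K[X]} {γ : WithTop Λ}

lemma le_augVal_mul_of_lt_map_sub (hν : IsValuation ν) (hQ : Q.Monic) (hQd : 0 < Q.natDegree)
    (hmin : IsVMinimal ν Q) (hγ : ν Q ≤ γ) (hγQ' : γ < ν (Q' - Q)) (x : K[X]) :
    γ + augVal ν Q γ x ≤ augVal ν Q γ (Q' * x) := by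
  rw [show Q' * x = Q * x + (Q' - Q) * x by ring]
  refine le_trans (le_min ?_ ?_) (min_le_augVal_add hν hQ hQd _ _)
  · rw [augVal_self_mul hν hQ hQd]
  · calc γ + augVal ν Q γ x ≤ ν (Q' - Q) + augVal ν Q γ x := add_le_add_left hγQ'.le _
      _ ≤ augVal ν Q γ ((Q' - Q) * x) := hmin.le_augVal_mul hν hQ hQd hγ _ _

lemma le_augVal_pow_mul_of_lt_map_sub (hν : IsValuation ν) (hQ : Q.Monic)
    (hQd : 0 < Q.natDegree) (hmin : IsVMinimal ν Q) (hγ : ν Q ≤ γ) (hγQ' : γ < ν (Q' - Q))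
    (s : ℕ) (x : K[X]) :
    s • γ + augVal ν Q γ x ≤ augVal ν Q γ (Q' ^ s * x) := by
  induction s with
  | zero => simp
  | succ s ih =>
    calc (s + 1) • γ + augVal ν Q γ x = γ + (s • γ + augVal ν Q γ x) := by
          rw [succ_nsmul']; abel
      _ ≤ γ + augVal ν Q γ (Q' ^ s * x) := add_le_add_right ih γ
      _ ≤ augVal ν Q γ (Q' ^ (s + 1) * x) := by
          rw [pow_succ', mul_assoc]
          exact le_augVal_mul_of_lt_map_sub hν hQ hQd hmin hγ hγQ' _

lemma nsmul_lt_augVal_pow_sub_pow (hν : IsValuation ν) (hQ : Q.Monic) (hQd : 0 < Q.natDegree)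
    (hmin : IsVMinimal ν Q) (hQ' : Q'.Monic) (hdeg : Q'.degree = Q.degree)
    (hγ : ν Q ≤ γ) (hγtop : γ ≠ ⊤) (hγQ' : γ < ν (Q' - Q)) {s : ℕ} (hs : 0 < s) :
    s • γ < augVal ν Q γ (Q' ^ s - Q ^ s) := by
  have hsub := degree_sub_lt_of_monic hQ hQ' hdeg
  induction s, hs using Nat.le_induction with
  | base => simpa [augVal_of_degree_lt hν hQ hQd hsub] using hγQ'
  | succ s hs ih =>
    have hsγ : s • γ ≠ ⊤ := nsmul_ne_top_of_ne_top hγtop s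
    rw [show Q' ^ (s + 1) - Q ^ (s + 1) = Q * (Q' ^ s - Q ^ s) + Q' ^ s * (Q' - Q) by ring,
      succ_nsmul']
    refine lt_of_lt_of_le (lt_min ?_ ?_) (min_le_augVal_add hν hQ hQd _ _)
    · rw [augVal_self_mul hν hQ hQd]
      exact WithTop.add_lt_add_left hγtop ih
    · calc γ + s • γ = s • γ + γ := add_comm _ _
        _ < s • γ + augVal ν Q γ (Q' - Q) := by
          rw [augVal_of_degree_lt hν hQ hQd hsub]
          exact WithTop.add_lt_add_left hsγ hγQ'
        _ ≤ augVal ν Q γ (Q' ^ s * (Q' - Q)) :=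
          le_augVal_pow_mul_of_lt_map_sub hν hQ hQd hmin hγ hγQ' s _

lemma augVal_le_and_eq_iff_of_lt_map_sub (hν : IsValuation ν) (hQ : Q.Monic)
    (hQd : 0 < Q.natDegree) (hmin : IsVMinimal ν Q) (hQ' : Q'.Monic)
    (hdeg : Q'.degree = Q.degree) (hγ : ν Q ≤ γ) (hγtop : γ ≠ ⊤) (hγQ' : γ < ν (Q' - Q))
    {f : K[X]} (hfin : augVal ν Q' γ f ≠ ⊤) (s : ℕ) :
    augVal ν Q' γ f ≤ ν (qCoeff Q f s) + s • γ ∧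
      (ν (qCoeff Q f s) + s • γ = augVal ν Q' γ f ↔
        ν (qCoeff Q' f s) + s • γ = augVal ν Q' γ f) := by
  have hQ'd : 0 < Q'.natDegree :=
    natDegree_pos_iff_degree_pos.mpr (hdeg ▸ natDegree_pos_iff_degree_pos.mp hQd)
  -- `f₀` has the `Q'`-coefficients of `f` as its `Q`-coefficients
  let f₀ := ∑ u ∈ Finset.range (f.natDegree + 1), qCoeff Q' f u * Q ^ u
  have hf₀ : qCoeff Q f₀ s = qCoeff Q' f s := by
    rw [qCoeff_sum_mul_pow hQ (fun u => hdeg ▸ degree_qCoeff_lt hQ' f u)]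
    split_ifs with hs
    · rfl
    · exact (qCoeff_eq_zero_of_natDegree_lt hQ' hQ'd (by omega)).symm
  have hrest : augVal ν Q' γ f < augVal ν Q γ (f - f₀) := by
    have hsum : f - f₀ =
        ∑ u ∈ Finset.range (f.natDegree + 1), qCoeff Q' f u * (Q' ^ u - Q ^ u) := by
      simp only [f₀, mul_sub, Finset.sum_sub_distrib, sum_qCoeff_mul_pow hQ' hQ'd]
    rw [hsum]
    refine ((Finset.lt_inf_iff hfin.lt_top).mpr fun u _ => ?_).trans_le
      (inf_le_augVal_sum hν hQ hQd _ _)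
    rcases Nat.eq_zero_or_pos u with rfl | hu
    · simpa [augVal_zero hν] using hfin.lt_top
    have hle := hmin.le_augVal_mul hν hQ hQd hγ (qCoeff Q' f u) (Q' ^ u - Q ^ u)
    by_cases ha : ν (qCoeff Q' f u) = ⊤
    · rw [ha, WithTop.top_add, top_le_iff] at hle
      rw [hle]
      exact hfin.lt_top
    calc augVal ν Q' γ f ≤ ν (qCoeff Q' f u) + u • γ := augVal_le hν hQ' hQ'd f u
      _ < ν (qCoeff Q' f u) + augVal ν Q γ (Q' ^ u - Q ^ u) := WithTop.add_lt_add_left ha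
          (nsmul_lt_augVal_pow_sub_pow hν hQ hQd hmin hQ' hdeg hγ hγtop hγQ' hu)
      _ ≤ _ := hle
  have hsplit : qCoeff Q f s = qCoeff Q' f s + qCoeff Q (f - f₀) s := by
    rw [← hf₀, ← qCoeff_add hQ, add_sub_cancel]
  rw [hsplit]
  exact hν.le_and_eq_iff_of_lt (augVal_le hν hQ' hQ'd f s)
    (hrest.trans_le (augVal_le hν hQ hQd _ s))

lemma IsStrictMinTerm.of_lt_map_sub (hν : IsValuation ν) (hQ : Q.Monic)
    (hQd : 0 < Q.natDegree) (hmin : IsVMinimal ν Q) (hQ' : Q'.Monic)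
    (hdeg : Q'.degree = Q.degree) (hγ : ν Q ≤ γ) (hγtop : γ ≠ ⊤) (hγQ' : γ < ν (Q' - Q))
    {f : K[X]} {t : ℕ} (hfin : ν (qCoeff Q' f t) + t • γ ≠ ⊤)
    (h : IsStrictMinTerm ν Q f γ t) : IsStrictMinTerm ν Q' f γ t := by
  have hQ'd : 0 < Q'.natDegree :=
    natDegree_pos_iff_degree_pos.mpr (hdeg ▸ natDegree_pos_iff_degree_pos.mp hQd)
  have hV : augVal ν Q' γ f ≠ ⊤ := ne_top_of_le_ne_top hfin (augVal_le hν hQ' hQ'd f t)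
  have key := augVal_le_and_eq_iff_of_lt_map_sub hν hQ hQd hmin hQ' hdeg hγ hγtop hγQ' hV
  obtain ⟨s₀, hs₀⟩ := exists_augVal_eq (ν := ν) (γ := γ) (Q := Q') f
  obtain rfl : s₀ = t := by
    by_contra hne
    exact (h s₀ hne).not_ge (((key s₀).2.mpr hs₀.symm).symm ▸ (key t).1)
  intro s hs
  refine lt_of_le_of_ne (hs₀ ▸ augVal_le hν hQ' hQ'd f s) fun heq => ?_
  exact (h s hs).ne (((key s₀).2.mpr hs₀.symm).trans ((key s).2.mpr (heq ▸ hs₀.symm)).symm)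

end Transfer

section Arithmetic

variable {x y γ γ' β : Λ} {s t n : ℕ}

lemma add_nsmul_lt_add_add_nsmul_iff :
    x + t • γ < y + (t + n) • γ ↔ x < y + n • γ := by
  rw [show y + (t + n) • γ = y + n • γ + t • γ by rw [add_nsmul]; abel, add_lt_add_iff_right]

lemma add_add_nsmul_le_add_nsmul_iff :
    x + (s + n) • γ ≤ y + s • γ ↔ x + n • γ ≤ y := by
  rw [show x + (s + n) • γ = x + n • γ + s • γ by rw [add_nsmul]; abel, add_le_add_iff_right]

lemma add_add_nsmul_lt_add_nsmul_iff :
    x + (s + n) • γ < y + s • γ ↔ x + n • γ < y := by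
  rw [show x + (s + n) • γ = x + n • γ + s • γ by rw [add_nsmul]; abel, add_lt_add_iff_right]

lemma nsmul_inv_smul {M : Type*} [AddCommGroup M] [Module ℚ M] (hn : n ≠ 0) (z : M) :
    n • ((n : ℚ)⁻¹ • z) = z := by
  rw [← Nat.cast_smul_eq_nsmul ℚ, smul_inv_smul₀ (Nat.cast_ne_zero.mpr hn)]

lemma exists_between_of_module_rat [Module ℚ Λ] (h : γ < β) : ∃ γ', γ < γ' ∧ γ' < β := by
  have h2 : 2 • ((2 : ℚ)⁻¹ • (γ + β)) = γ + β := by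
    simpa using nsmul_inv_smul (n := 2) two_ne_zero (γ + β)
  refine ⟨(2 : ℚ)⁻¹ • (γ + β), lt_of_nsmul_lt_nsmul_right 2 ?_,
    lt_of_nsmul_lt_nsmul_right 2 ?_⟩
  · rw [h2, two_nsmul]; gcongr
  · rw [h2, two_nsmul]; gcongr

lemma exists_ge_lt_lt_add_nsmul [Module ℚ Λ] (hn : n ≠ 0) (hγ : γ < β)
    (h : x < y + n • β) : ∃ γ', γ ≤ γ' ∧ γ' < β ∧ x < y + n • γ' := by
  -- `c` is the exact threshold `(x - y) / n`
  set c := (n : ℚ)⁻¹ • (x - y)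
  have hc : n • c = x - y := nsmul_inv_smul hn _
  have hcβ : c < β := lt_of_nsmul_lt_nsmul_right n (by rw [hc]; exact sub_lt_iff_lt_add'.mpr h)
  obtain ⟨γ', hγ', hγ'β⟩ := exists_between_of_module_rat (max_lt hγ hcβ)
  refine ⟨γ', (le_max_left _ _).trans hγ'.le, hγ'β, ?_⟩
  have : n • c < n • γ' := nsmul_lt_nsmul_right hn ((le_max_right _ _).trans_lt hγ')
  rw [hc, sub_lt_iff_lt_add'] at this
  exact this

end Arithmetic

section WithTopArithmetic

variable {x y : WithTop Λ} {γ γ' β : Λ} {s t : ℕ}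

lemma add_nsmul_lt_add_nsmul_of_index_lt (hx : x ≠ ⊤) (hst : s < t) (hγ : γ < β)
    (h : x + t • (β : WithTop Λ) ≤ y + s • (β : WithTop Λ)) :
    x + t • (γ : WithTop Λ) < y + s • (γ : WithTop Λ) := by
  obtain ⟨n, rfl⟩ := Nat.exists_eq_add_of_lt hst
  by_cases hy : y = ⊤
  · simp only [hy, WithTop.top_add]
    exact add_nsmul_coe_lt_top hx _ _
  lift x to Λ using hx
  lift y to Λ using hy
  norm_cast at h ⊢
  rw [add_assoc, add_add_nsmul_le_add_nsmul_iff] at h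
  rw [add_assoc, add_add_nsmul_lt_add_nsmul_iff]
  exact (add_lt_add_right (nsmul_lt_nsmul_right (by omega) hγ) x).trans_le h

lemma add_nsmul_lt_add_nsmul_of_index_gt (hts : t < s) (hγ : γ ≤ γ')
    (h : x + t • (γ : WithTop Λ) < y + s • (γ : WithTop Λ)) :
    x + t • (γ' : WithTop Λ) < y + s • (γ' : WithTop Λ) := by
  obtain ⟨n, rfl⟩ := Nat.exists_eq_add_of_lt hts
  have hx : x ≠ ⊤ := by rintro rfl; simp at h
  by_cases hy : y = ⊤
  · simp only [hy, WithTop.top_add]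
    exact add_nsmul_coe_lt_top hx _ _
  lift x to Λ using hx
  lift y to Λ using hy
  norm_cast at h ⊢
  rw [add_assoc, add_nsmul_lt_add_add_nsmul_iff] at h ⊢
  exact h.trans_le (by gcongr)

lemma exists_ge_lt_forall_add_nsmul_lt [Module ℚ Λ] {v : ℕ → WithTop Λ} {γ₀ : Λ}
    (hγ₀ : γ₀ < β) (S : Finset ℕ)
    (h : ∀ s ∈ S, t < s → v t + t • (β : WithTop Λ) < v s + s • (β : WithTop Λ)) :
    ∃ γ, γ₀ ≤ γ ∧ γ < β ∧
      ∀ s ∈ S, t < s → v t + t • (γ : WithTop Λ) < v s + s • (γ : WithTop Λ) := by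
  classical
  induction S using Finset.induction_on with
  | empty => exact ⟨γ₀, le_rfl, hγ₀, by simp⟩
  | insert a S ha ih =>
    obtain ⟨γ₁, hγ₀₁, hγ₁, hS⟩ := ih fun s hs => h s (Finset.mem_insert_of_mem hs)
    suffices ∃ γ, γ₁ ≤ γ ∧ γ < β ∧
        (t < a → v t + t • (γ : WithTop Λ) < v a + a • (γ : WithTop Λ)) by
      obtain ⟨γ, hγ₁γ, hγ, ha⟩ := this
      refine ⟨γ, hγ₀₁.trans hγ₁γ, hγ, fun s hs hts => ?_⟩
      rcases Finset.mem_insert.mp hs with rfl | hs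
      · exact ha hts
      · exact add_nsmul_lt_add_nsmul_of_index_gt hts hγ₁γ (hS s hs hts)
    by_cases hta : t < a
    swap
    · exact ⟨γ₁, le_rfl, hγ₁, fun h => absurd h hta⟩
    have hβ := h a (Finset.mem_insert_self a S) hta
    have hx : v t ≠ ⊤ := by intro hx; simp [hx] at hβ
    by_cases hy : v a = ⊤
    · refine ⟨γ₁, le_rfl, hγ₁, fun _ => ?_⟩
      rw [hy, WithTop.top_add]
      exact add_nsmul_coe_lt_top hx _ _
    obtain ⟨n, hn⟩ := Nat.exists_eq_add_of_lt hta
    lift v t to Λ using hx with x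
    lift v a to Λ using hy with y
    rw [hn] at hβ ⊢
    norm_cast at hβ
    rw [add_assoc, add_nsmul_lt_add_add_nsmul_iff] at hβ
    obtain ⟨γ, hγ₁γ, hγ, hlt⟩ := exists_ge_lt_lt_add_nsmul (by omega) hγ₁ hβ
    refine ⟨γ, hγ₁γ, hγ, fun _ => ?_⟩
    norm_cast
    rw [add_assoc, add_nsmul_lt_add_add_nsmul_iff]
    exact hlt

lemma exists_ge_lt_forall_ne_add_nsmul_lt [Module ℚ Λ] {v : ℕ → WithTop Λ} {N : ℕ}
    {γ₀ : WithTop Λ} (hγ₀ : γ₀ < β) (hfin : v t ≠ ⊤) (htop : ∀ s, N ≤ s → v s = ⊤)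
    (hle : ∀ s, v t + t • (β : WithTop Λ) ≤ v s + s • (β : WithTop Λ))
    (hlt : ∀ s, t < s → v t + t • (β : WithTop Λ) < v s + s • (β : WithTop Λ)) :
    ∃ γ : Λ, γ₀ ≤ γ ∧ γ < β ∧
      ∀ s ≠ t, v t + t • (γ : WithTop Λ) < v s + s • (γ : WithTop Λ) := by
  lift γ₀ to Λ using hγ₀.ne_top
  obtain ⟨γ, hγ₀γ, hγ, hγlt⟩ := exists_ge_lt_forall_add_nsmul_lt
    (WithTop.coe_lt_coe.mp hγ₀) (Finset.range N) fun s _ => hlt s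
  refine ⟨γ, WithTop.coe_le_coe.mpr hγ₀γ, hγ, fun s hs => ?_⟩
  rcases hs.lt_or_gt with hst | hts
  · exact add_nsmul_lt_add_nsmul_of_index_lt hfin hst hγ (hle s)
  by_cases hsN : s < N
  · exact hγlt s (Finset.mem_range.mpr hsN) hts
  rw [htop s (not_lt.mp hsN), WithTop.top_add]
  exact add_nsmul_coe_lt_top hfin _ _

end WithTopArithmetic

namespace MacLaneChain

variable (ch : MacLaneChain K Λ)

lemma rho_le_rho {k l : ℕ} (hkl : k ≤ l) (f : K[X]) : ch.ρ k f ≤ ch.ρ l f := by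
  induction l, hkl using Nat.le_induction with
  | base => exact le_rfl
  | succ l _ ih => exact ih.trans ((ch.mono l).1 f)

lemma degree_chi (k : ℕ) : (ch.χ (k + 1)).degree = ch.m := by
  rw [degree_eq_natDegree (ch.monicChi k).ne_zero, ch.degChi k]

lemma natDegree_chi_pos (k : ℕ) : 0 < (ch.χ (k + 1)).natDegree := ch.degChi k ▸ ch.hm

lemma isVMinimal (k : ℕ) : IsVMinimal (ch.ρ k) (ch.χ (k + 1)) := (ch.keyChi k).2.1

lemma rho_eq_of_degree_lt {f : K[X]} (hf : f.degree < ch.m) (k l : ℕ) :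
    ch.ρ k f = ch.ρ l f := by
  have h : ∀ n, ch.ρ n f = ch.ρ 0 f := fun n => by
    induction n with
    | zero => rfl
    | succ n ih =>
      rw [ch.aug n, augVal_of_degree_lt (ch.isVal n) (ch.monicChi n) (ch.natDegree_chi_pos n)
        (ch.degree_chi n ▸ hf), ih]
  rw [h k, h l]

lemma degree_qCoeff_chi_lt (k : ℕ) (f : K[X]) (s : ℕ) :
    (qCoeff (ch.χ (k + 1)) f s).degree < ch.m :=
  ch.degree_chi k ▸ degree_qCoeff_lt (ch.monicChi k) f s

lemma degree_chi_sub_chi_lt (k l : ℕ) : (ch.χ (l + 1) - ch.χ (k + 1)).degree < ch.m :=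
  ch.degree_chi k ▸ degree_sub_lt_of_monic (ch.monicChi k) (ch.monicChi l)
    ((ch.degree_chi l).trans (ch.degree_chi k).symm)

lemma rho_chi_succ_sub_chi (k : ℕ) :
    ch.ρ (k + 1) (ch.χ (k + 2) - ch.χ (k + 1)) = ch.β (k + 1) := by
  have hβ := ch.beta_def k
  refine le_antisymm ?_ (not_lt.mp fun hlt => ?_)
  · -- `χ_{k+2} ∤_{ρ_{k+1}} χ_{k+1}`, tested with the quotient `1`
    have h := ch.not_dvd k
    simp only [VDvd, VEquiv, not_exists, not_lt] at h
    simpa [hβ, (ch.isVal (k + 1)).map_sub_comm] using h 1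
  -- if `d < β_{k+1}`, then at level `k + 2` both `χ_{k+2}` and `χ_{k+1}` have value `> d`,
  -- yet their difference has value `d`
  set d := ch.ρ (k + 1) (ch.χ (k + 2) - ch.χ (k + 1))
  have hval : ch.ρ (k + 1) (ch.χ (k + 2)) = d := by
    rw [← sub_add_cancel (ch.χ (k + 2)) (ch.χ (k + 1)),
      (ch.isVal (k + 1)).map_add_eq_of_lt (hβ ▸ hlt)]
  have hd : ch.ρ (k + 2) (ch.χ (k + 2) - ch.χ (k + 1)) = d :=
    ch.rho_eq_of_degree_lt (ch.degree_chi_sub_chi_lt k (k + 1)) _ _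
  have hmin := (ch.isVal (k + 2)).min_le_map_sub (ch.χ (k + 2)) (ch.χ (k + 1))
  rw [hd, ch.beta_def (k + 1)] at hmin
  refine hmin.not_gt (lt_min (hval ▸ ch.beta_lt (k + 1)) ?_)
  exact hlt.trans_le (hβ ▸ ch.rho_le_rho (Nat.le_succ _) _)

lemma beta_lt_beta_succ (k : ℕ) : ch.β (k + 1) < ch.β (k + 2) := by
  have hle : (ch.β (k + 1) : WithTop Λ) ≤ ch.ρ (k + 1) (ch.χ (k + 2)) := by
    rw [← sub_add_cancel (ch.χ (k + 2)) (ch.χ (k + 1))]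
    refine le_trans ?_ ((ch.isVal (k + 1)).2.2.1 _ _)
    rw [ch.rho_chi_succ_sub_chi, ch.beta_def, min_self]
  exact_mod_cast hle.trans_lt (ch.beta_lt (k + 1))

lemma beta_lt_beta {k l : ℕ} (hkl : k < l) : ch.β (k + 1) < ch.β (l + 1) := by
  induction l, hkl using Nat.le_induction with
  | base => exact ch.beta_lt_beta_succ k
  | succ l _ ih => exact ih.trans (ch.beta_lt_beta_succ l)

lemma rho_chi_sub_chi {k l : ℕ} (hkl : k < l) (n : ℕ) :
    ch.ρ n (ch.χ (l + 1) - ch.χ (k + 1)) = ch.β (k + 1) := by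
  rw [ch.rho_eq_of_degree_lt (ch.degree_chi_sub_chi_lt k l) n (k + 1)]
  induction l, hkl using Nat.le_induction with
  | base => exact ch.rho_chi_succ_sub_chi k
  | succ l hkl ih =>
    have hstep : ch.ρ (k + 1) (ch.χ (l + 2) - ch.χ (l + 1)) = ch.β (l + 1) := by
      rw [ch.rho_eq_of_degree_lt (ch.degree_chi_sub_chi_lt l (l + 1)) _ (l + 1)]
      exact ch.rho_chi_succ_sub_chi l
    rw [← sub_add_sub_cancel (ch.χ (l + 2)) (ch.χ (l + 1)),
      add_comm (ch.χ (l + 2) - ch.χ (l + 1)), (ch.isVal (k + 1)).map_add_eq_of_lt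
        (by rw [ih, hstep]; exact_mod_cast ch.beta_lt_beta hkl), ih]

lemma rho_chi {k l : ℕ} (hkl : k ≤ l) : ch.ρ (k + 1) (ch.χ (l + 1)) = ch.β (k + 1) := by
  rcases hkl.eq_or_lt with rfl | hkl
  · exact ch.beta_def k
  have hQ := ch.monicChi k
  have hQd := ch.natDegree_chi_pos k
  obtain ⟨hdiv, hmod⟩ := div_modByMonic_unique (f := ch.χ (l + 1)) 1 _ hQ
    ⟨by ring, ch.degree_chi k ▸ ch.degree_chi_sub_chi_lt k l⟩
  rw [ch.aug k, augVal_eq_min (ch.isVal k) hQ hQd, hdiv, hmod, ch.rho_chi_sub_chi hkl,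
    augVal_of_degree_lt (ch.isVal k) hQ hQd
      (by rw [degree_one, ch.degree_chi]; exact_mod_cast ch.hm),
    (ch.isVal k).map_one, add_zero, min_self]

lemma rho_qCoeff_mul_chi_pow {k l : ℕ} (hkl : k ≤ l) (f : K[X]) (s n : ℕ) :
    ch.ρ (k + 1) (qCoeff (ch.χ (l + 1)) f s * ch.χ (l + 1) ^ s)
      = ch.ρ n (qCoeff (ch.χ (l + 1)) f s) + s • (ch.β (k + 1) : WithTop Λ) := by
  rw [(ch.isVal (k + 1)).2.1, (ch.isVal (k + 1)).map_pow, ch.rho_chi hkl,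
    ch.rho_eq_of_degree_lt (ch.degree_qCoeff_chi_lt l f s)]

lemma rho_terms_of_isGreatest_attain {l : ℕ} {f : K[X]} {t : ℕ}
    (h : IsGreatest (attain (ch.ρ (l + 1)) (ch.χ (l + 1)) f) t) (n : ℕ) :
    ch.ρ n (qCoeff (ch.χ (l + 1)) f t) ≠ ⊤ ∧
      (∀ s, ch.ρ n (qCoeff (ch.χ (l + 1)) f t) + t • (ch.β (l + 1) : WithTop Λ)
        ≤ ch.ρ n (qCoeff (ch.χ (l + 1)) f s) + s • (ch.β (l + 1) : WithTop Λ)) ∧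
      ∀ s, t < s → ch.ρ n (qCoeff (ch.χ (l + 1)) f t) + t • (ch.β (l + 1) : WithTop Λ)
        < ch.ρ n (qCoeff (ch.χ (l + 1)) f s) + s • (ch.β (l + 1) : WithTop Λ) := by
  have h := terms_of_isGreatest_attain (ch.isVal _) (ch.monicChi l) (ch.natDegree_chi_pos l) h
  simp only [ch.rho_qCoeff_mul_chi_pow le_rfl f _ n, WithTop.add_ne_top] at h
  exact ⟨h.1.1, h.2⟩

lemma exists_isStrictMinTerm_of_isGreatest [Module ℚ Λ] {k : ℕ} {f : K[X]} {t : ℕ}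
    (h : IsGreatest (attain (ch.ρ (k + 1)) (ch.χ (k + 1)) f) t) :
    ∃ γ : Λ, ch.ρ k (ch.χ (k + 1)) ≤ γ ∧ γ < ch.β (k + 1) ∧
      IsStrictMinTerm (ch.ρ k) (ch.χ (k + 1)) f γ t := by
  obtain ⟨hfin, hle, hlt⟩ := ch.rho_terms_of_isGreatest_attain h k
  refine exists_ge_lt_forall_ne_add_nsmul_lt (v := fun s => ch.ρ k (qCoeff (ch.χ (k + 1)) f s))
    (N := f.natDegree + 1) (ch.beta_lt k) hfin (fun s hs => ?_) hle hlt
  rw [qCoeff_eq_zero_of_natDegree_lt (ch.monicChi k) (ch.natDegree_chi_pos k) hs, (ch.isVal k).1]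

lemma isStrictMinTerm_beta {k l : ℕ} (hkl : k < l) {f : K[X]} {t : ℕ}
    (h : IsGreatest (attain (ch.ρ (l + 1)) (ch.χ (l + 1)) f) t) {γ : Λ} (hγ : γ ≤ ch.β (k + 1))
    (hγt : IsStrictMinTerm (ch.ρ k) (ch.χ (l + 1)) f γ t) :
    IsStrictMinTerm (ch.ρ k) (ch.χ (l + 1)) f (ch.β (k + 1)) t := by
  obtain ⟨hfin, hle, -⟩ := ch.rho_terms_of_isGreatest_attain h k
  intro s hs
  rcases hs.lt_or_gt with hst | hts
  · exact add_nsmul_lt_add_nsmul_of_index_lt hfin hst (ch.beta_lt_beta hkl) (hle s)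
  · exact add_nsmul_lt_add_nsmul_of_index_gt hts hγ (hγt s hs)

lemma vEquiv_of_isStrictMinTerm {k l : ℕ} (hkl : k ≤ l) {f : K[X]} {t : ℕ}
    (hfin : ch.ρ k (qCoeff (ch.χ (l + 1)) f t) ≠ ⊤)
    (h : IsStrictMinTerm (ch.ρ k) (ch.χ (l + 1)) f (ch.β (k + 1)) t) :
    VEquiv (ch.ρ (k + 1)) f (qCoeff (ch.χ (l + 1)) f t * ch.χ (l + 1) ^ t) := by
  have key := (ch.isVal (k + 1)).vEquiv_sum (S := Finset.range (f.natDegree + 1))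
    (G := fun s => qCoeff (ch.χ (l + 1)) f s * ch.χ (l + 1) ^ s)
    (Finset.mem_range_succ_iff.mpr (le_natDegree_of_map_qCoeff_ne_top (ch.isVal k)
      (ch.monicChi l) (ch.natDegree_chi_pos l) hfin))
    (by simpa [ch.rho_qCoeff_mul_chi_pow hkl f _ k] using (add_nsmul_coe_lt_top hfin t _).ne)
    (fun s _ hs => by simpa [ch.rho_qCoeff_mul_chi_pow hkl f _ k] using h s hs)
  rwa [sum_qCoeff_mul_pow (ch.monicChi l) (ch.natDegree_chi_pos l)] at key

end MacLaneChain

variable [Module ℚ Λ]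

theorem stmt15_general (ch : MacLaneChain K Λ)
    (φ : K[X]) (t i0 : ℕ)
    (ht : ∀ i : ℕ, i0 ≤ i → IsGreatest (attain (ch.ρ i) (ch.χ i) φ) t) :
    ∀ i j : ℕ, i0 < i → i < j →
      VEquiv (ch.ρ i) φ (qCoeff (ch.χ j) φ t * ch.χ j ^ t) := by
  intro i j hi hij
  obtain ⟨k, rfl⟩ : ∃ k, i = k + 1 := ⟨i - 1, by omega⟩
  obtain ⟨l, rfl⟩ : ∃ l, j = l + 1 := ⟨j - 1, by omega⟩
  have hkl : k < l := by omega
  have hj := ht (l + 1) (by omega)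
  have hfin := (ch.rho_terms_of_isGreatest_attain hj k).1
  obtain ⟨γ, hγ₀, hγβ, hγ⟩ := ch.exists_isStrictMinTerm_of_isGreatest (ht (k + 1) hi.le)
  have hγ' := hγ.of_lt_map_sub (ch.isVal k) (ch.monicChi k) (ch.natDegree_chi_pos k)
    (ch.isVMinimal k) (ch.monicChi l) ((ch.degree_chi l).trans (ch.degree_chi k).symm) hγ₀
    WithTop.coe_ne_top (by rw [ch.rho_chi_sub_chi hkl]; exact_mod_cast hγβ)
    (add_nsmul_coe_lt_top hfin t γ).ne
  exact ch.vEquiv_of_isStrictMinTerm hkl.le hfin (ch.isStrictMinTerm_beta hkl hj hγβ.le hγ')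

/-- if `t = t_∞(φ)` is stabilized from `i0` on, then for all
`i0 < i < j` one has `φ ∼_{ρ_i} a_{t,j} χ_j^t`. -/
theorem stmt15 (ch : MacLaneChain K Λ) (hess : ch.Essential)
    (φ : K[X]) (hφ : ch.IsLimKP φ) (t i0 : ℕ) (hi0 : 1 ≤ i0)
    (ht : ∀ i : ℕ, i0 ≤ i → IsGreatest (attain (ch.ρ i) (ch.χ i) φ) t) :
    ∀ i j : ℕ, i0 < i → i < j →
      VEquiv (ch.ρ i) φ (qCoeff (ch.χ j) φ t * ch.χ j ^ t) :=
  stmt15_general ch φ t i0 ht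

end KeyPolPaper
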